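/- For every integer n ≥ 1, every integer e ≥ 1, and every i with 1 ≤ i ≤ n, the (i,1) entry of the e-th power of the matrix R_n equals F_{e-1}^{n-i} · F_e^{i-1} (with the convention 0^0 = 1). -/
import Mathlib


/-- `R n` is the `n × n` integer matrix whose `(i,j)` entry (1-based) is
`C(i-1, n-j)`; with 0-based indices the entry is `C(i, n-1-j)`. -/
def binR (n : ℕ) : Matrix (Fin n) (Fin n) ℤ :=
  fun i j => (Nat.choose i (n - 1 - j) : ℤ)

lemma binR_pow_aux (n : ℕ) (hn : 1 ≤ n) (e : ℕ) :
    ∀ (a : ℕ) (ha : a < n),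
      (binR n ^ (e + 1)) ⟨a, ha⟩ ⟨0, by omega⟩ =
        (Nat.fib e : ℤ) ^ (n - 1 - a) * (Nat.fib (e + 1) : ℤ) ^ a := by
  induction e with
  | zero =>
    intro a ha
    rw [zero_add, pow_one]
    show ((Nat.choose a (n - 1 - 0) : ℤ)) = _
    rw [Nat.sub_zero]
    by_cases h : a = n - 1
    · subst h
      simp
    · rw [Nat.choose_eq_zero_of_lt (by omega)]
      have h2 : n - 1 - a ≠ 0 := by omega
      simp [h2]
  | succ e ih =>
    intro a ha
    rw [pow_succ', Matrix.mul_apply]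
    have hterm : ∀ k : Fin n,
        binR n ⟨a, ha⟩ k * (binR n ^ (e + 1)) k ⟨0, by omega⟩ =
          (Nat.choose a (n - 1 - (k : ℕ)) : ℤ) * ((Nat.fib e : ℤ) ^ (n - 1 - (k : ℕ)) *
            (Nat.fib (e + 1) : ℤ) ^ (k : ℕ)) := by
      intro k
      rw [show ((k : Fin n) = ⟨(k : ℕ), k.isLt⟩) from rfl, ih k k.isLt]
      rfl
    rw [Finset.sum_congr rfl (fun k _ => hterm k), Fin.sum_univ_eq_sum_range
      (fun k => (Nat.choose a (n - 1 - k) : ℤ) * ((Nat.fib e : ℤ) ^ (n - 1 - k) *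
        (Nat.fib (e + 1) : ℤ) ^ k))]
    have hreflect := Finset.sum_range_reflect
      (fun m => (Nat.choose a m : ℤ) * ((Nat.fib e : ℤ) ^ m *
        (Nat.fib (e + 1) : ℤ) ^ (n - 1 - m))) n
    have heq : ∀ k ∈ Finset.range n,
        (Nat.choose a (n - 1 - k) : ℤ) * ((Nat.fib e : ℤ) ^ (n - 1 - k) *
          (Nat.fib (e + 1) : ℤ) ^ k) =
        (fun m => (Nat.choose a m : ℤ) * ((Nat.fib e : ℤ) ^ m *
          (Nat.fib (e + 1) : ℤ) ^ (n - 1 - m))) (n - 1 - k) := by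
      intro k hk
      simp only [Finset.mem_range] at hk
      have : n - 1 - (n - 1 - k) = k := by omega
      simp [this]
    rw [Finset.sum_congr rfl heq, hreflect]
    -- now sum over m of C(a,m) fib e^m fib(e+1)^{n-1-m}
    have hsub : Finset.range (a + 1) ⊆ Finset.range n := by
      intro x hx; simp only [Finset.mem_range] at *; omega
    rw [← Finset.sum_subset hsub (by
      intro x hx hx2
      simp only [Finset.mem_range] at hx hx2
      rw [Nat.choose_eq_zero_of_lt (by omega)]
      ring)]
    have hfactor : ∀ m ∈ Finset.range (a + 1),
        (Nat.choose a m : ℤ) * ((Nat.fib e : ℤ) ^ m *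
          (Nat.fib (e + 1) : ℤ) ^ (n - 1 - m)) =
        (Nat.fib (e + 1) : ℤ) ^ (n - 1 - a) *
          ((Nat.fib e : ℤ) ^ m * (Nat.fib (e + 1) : ℤ) ^ (a - m) * (Nat.choose a m : ℤ)) := by
      intro m hm
      simp only [Finset.mem_range] at hm
      have h1 : n - 1 - m = (n - 1 - a) + (a - m) := by omega
      rw [h1, pow_add]
      ring
    rw [Finset.sum_congr rfl hfactor, ← Finset.mul_sum, ← add_pow]
    have : ((Nat.fib e : ℤ) + (Nat.fib (e + 1) : ℤ)) = (Nat.fib (e + 2) : ℤ) := by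
      rw [Nat.fib_add_two]; push_cast; ring
    rw [this]

theorem stmt_1 (n e : ℕ) (hn : 1 ≤ n) (he : 1 ≤ e)
    (i : ℕ) (hi1 : 1 ≤ i) (hi2 : i ≤ n) :
    (binR n ^ e) ⟨i - 1, by omega⟩ ⟨0, by omega⟩ =
      (Nat.fib (e - 1) : ℤ) ^ (n - i) * (Nat.fib e : ℤ) ^ (i - 1) := by
  obtain ⟨e, rfl⟩ : ∃ e', e = e' + 1 := ⟨e - 1, by omega⟩
  have := binR_pow_aux n hn e (i - 1) (by omega)
  rw [this]
  have h1 : n - 1 - (i - 1) = n - i := by omega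
  simp [h1]
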